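/- Let p, p', q' be positive integers with p odd, p' ≡ q' (mod 2), p'q' ≤ p and (p', q') ≠ (p, 1). Then for every real number m > 0, h^m_{p,1} ≠ h^m_{p',q'}. (The vanishing curve C_{p,1} intersects no other vanishing curve of level ≤ p/2.) -/

import Mathlib

/-!
Two weights `h^m_{p,q}` and `h^m_{p',q'}` agree exactly when `(m+2)(p ∓ p') = m(q ∓ q')`.
For `m > 0` the factor `m + 2` exceeds `m`, so a positive left factor forces a strictly larger
right one. With `q = 1` the level bound `p'q' ≤ p` gives `p' ≤ p` and `q' ≤ p`: the `−` sign then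
forces `(p', q') = (p, 1)`, and the `+` sign gives `p + p' < 1 + q' ≤ 1 + p`, i.e. `p' < 1`.
-/

/-- `h^m_{p,q} = (((m+2)p − mq)² − 4) / (8m(m+2))`. -/
noncomputable def hPQ (m : ℝ) (p q : ℤ) : ℝ :=
  (((m + 2) * (p : ℝ) - m * (q : ℝ)) ^ 2 - 4) / (8 * m * (m + 2))

theorem hPQ_eq_hPQ_iff {m : ℝ} (hm : m ≠ 0) (hm2 : m + 2 ≠ 0) (p q p' q' : ℤ) :
    hPQ m p q = hPQ m p' q' ↔
      (m + 2) * ((p - p' : ℤ) : ℝ) = m * ((q - q' : ℤ) : ℝ) ∨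
        (m + 2) * ((p + p' : ℤ) : ℝ) = m * ((q + q' : ℤ) : ℝ) := by
  have hden : 8 * m * (m + 2) ≠ 0 := by positivity
  unfold hPQ
  rw [div_left_inj' hden, sub_left_inj, sq_eq_sq_iff_eq_or_eq_neg]
  push_cast
  constructor <;> rintro (h | h) <;> [left; right; left; right] <;> linarith

theorem lt_of_add_two_mul_eq_mul {K : Type*} [Field K] [LinearOrder K] [IsStrictOrderedRing K]
    {m a b : K} (hm : 0 < m) (h : (m + 2) * a = m * b) (ha : 0 < a) : a < b := by
  refine lt_of_mul_lt_mul_left ?_ hm.le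
  linarith

theorem curve_p1_no_intersection_general (p p' q' : ℤ) (hp' : 1 ≤ p') (hq' : 1 ≤ q')
    (hlev : p' * q' ≤ p) (hne : (p', q') ≠ (p, 1)) :
    ∀ m : ℝ, 0 < m → hPQ m p 1 ≠ hPQ m p' q' := by
  intro m hm heq
  have hp'p : p' ≤ p := (le_mul_of_one_le_right (by omega) hq').trans hlev
  have hq'p : q' ≤ p := (le_mul_of_one_le_left (by omega) hp').trans hlev
  rcases (hPQ_eq_hPQ_iff hm.ne' (by linarith) p 1 p' q').1 heq with h | h
  · rcases hp'p.lt_or_eq with hlt | rfl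
    · have := lt_of_add_two_mul_eq_mul hm h (by exact_mod_cast sub_pos.2 hlt)
      norm_cast at this
      omega
    · have : q' = 1 := by
        simp only [sub_self, Int.cast_zero, mul_zero, zero_eq_mul, hm.ne', false_or] at h
        exact (sub_eq_zero.1 (Int.cast_eq_zero.1 h)).symm
      exact hne (by rw [this])
  · have := lt_of_add_two_mul_eq_mul hm h (by exact_mod_cast (by omega : 0 < p + p'))
    norm_cast at this
    omega

/-- The vanishing curve `C_{p,1}` intersects no other vanishing curve of level `≤ p/2`:
if `p` is odd, `p' ≡ q' (mod 2)`, `p'q' ≤ p` and `(p',q') ≠ (p,1)`, then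
`h^m_{p,1} ≠ h^m_{p',q'}` for every `m > 0`. -/
theorem curve_p1_no_intersection (p p' q' : ℤ) (hp : 1 ≤ p) (hp' : 1 ≤ p') (hq' : 1 ≤ q')
    (hodd : Odd p) (hpar : p' % 2 = q' % 2) (hlev : p' * q' ≤ p) (hne : (p', q') ≠ (p, 1)) :
    ∀ m : ℝ, 0 < m → hPQ m p 1 ≠ hPQ m p' q' :=
  curve_p1_no_intersection_general p p' q' hp' hq' hlev hne
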